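/- arXiv:2012.04625 — 3 statements merged into one kernel-verified Lean document; each statement's English description precedes it below -/
import Mathlib

section
/- If the sequence (d_k) and (e_k) are base-b digit sequences (all values in {0,…,b−1}, finitely many nonzero) that differ, and the largest index at which they differ is an even number 2ℓ, then Σ_k (d_{2k} − e_{2k})·b^{2k} ≠ Σ_k (d_{2k+1} − e_{2k+1})·b^{2k+1}. Specifically, the absolute value of the left-hand side is at least (b/(b+1))·b^{2ℓ}, while the absolute value of the right-hand side is at most (b/(b+1))·b^{2ℓ} − b/(b+1). -/
theorem even_odd_digit_sums_differ
    (b : ℕ) (hb : 2 ≤ b) (d e : ℕ → ℤ)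
    (hd : ∀ k, 0 ≤ d k ∧ d k ≤ (b : ℤ) - 1)
    (he : ∀ k, 0 ≤ e k ∧ e k ≤ (b : ℤ) - 1)
    (M : ℕ) (hM : ∀ k, M ≤ k → d k = 0 ∧ e k = 0)
    (ℓ : ℕ)
    (hdiff : d (2 * ℓ) ≠ e (2 * ℓ))
    (habove : ∀ k, 2 * ℓ < k → d k = e k) :
    (∑ k ∈ Finset.range M, (d (2 * k) - e (2 * k)) * (b : ℤ) ^ (2 * k)) ≠
      (∑ k ∈ Finset.range M, (d (2 * k + 1) - e (2 * k + 1)) * (b : ℤ) ^ (2 * k + 1)) ∧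
    ((b : ℚ) / ((b : ℚ) + 1)) * (b : ℚ) ^ (2 * ℓ) ≤
      |((∑ k ∈ Finset.range M, (d (2 * k) - e (2 * k)) * (b : ℤ) ^ (2 * k) : ℤ) : ℚ)| ∧
    |((∑ k ∈ Finset.range M, (d (2 * k + 1) - e (2 * k + 1)) * (b : ℤ) ^ (2 * k + 1) : ℤ) : ℚ)| ≤
      ((b : ℚ) / ((b : ℚ) + 1)) * (b : ℚ) ^ (2 * ℓ) - (b : ℚ) / ((b : ℚ) + 1) := by
  have hB : (2:ℤ) ≤ (b:ℤ) := by exact_mod_cast hb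
  have hBpos : (0:ℤ) ≤ (b:ℤ) := by linarith
  have hf : ∀ k, |d k - e k| ≤ (b:ℤ) - 1 := fun k =>
    abs_le.2 ⟨by linarith [(hd k).1, (he k).2], by linarith [(hd k).2, (he k).1]⟩
  have hℓM : ℓ < M := by
    by_contra h
    push_neg at h
    obtain ⟨h1, h2⟩ := hM (2*ℓ) (by omega)
    exact hdiff (by rw [h1, h2])
  set G : ℤ := ∑ k ∈ Finset.range ℓ, ((b:ℤ)^2)^k with hGdef
  have hG : G * ((b:ℤ)^2 - 1) = (b:ℤ)^(2*ℓ) - 1 := by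
    rw [hGdef, geom_sum_mul, ← pow_mul]
  have hGnn : 0 ≤ G := Finset.sum_nonneg fun k _ => pow_nonneg (by positivity) k
  set Sev := ∑ k ∈ Finset.range M, (d (2*k) - e (2*k)) * (b:ℤ)^(2*k) with hSevdef
  set Sod := ∑ k ∈ Finset.range M, (d (2*k+1) - e (2*k+1)) * (b:ℤ)^(2*k+1) with hSoddef
  have hSod' : Sod = ∑ k ∈ Finset.range ℓ, (d (2*k+1) - e (2*k+1)) * (b:ℤ)^(2*k+1) := by
    rw [hSoddef]
    refine (Finset.sum_subset (Finset.range_subset_range.2 hℓM.le) (fun k hk hk' => ?_)).symm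
    simp only [Finset.mem_range] at hk hk'
    rw [habove (2*k+1) (by omega), sub_self, zero_mul]
  have hSev' : Sev = ∑ k ∈ Finset.range (ℓ+1), (d (2*k) - e (2*k)) * (b:ℤ)^(2*k) := by
    rw [hSevdef]
    refine (Finset.sum_subset (Finset.range_subset_range.2 hℓM) (fun k hk hk' => ?_)).symm
    simp only [Finset.mem_range] at hk hk'
    rw [habove (2*k) (by omega), sub_self, zero_mul]
  -- bound on the odd sum
  have hboundodd : |Sod| ≤ (b:ℤ)*((b:ℤ)-1)*G := by
    rw [hSod']
    calc |∑ k ∈ Finset.range ℓ, (d (2*k+1) - e (2*k+1)) * (b:ℤ)^(2*k+1)|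
        ≤ ∑ k ∈ Finset.range ℓ, |(d (2*k+1) - e (2*k+1)) * (b:ℤ)^(2*k+1)| :=
          Finset.abs_sum_le_sum_abs _ _
      _ ≤ ∑ k ∈ Finset.range ℓ, ((b:ℤ)*((b:ℤ)-1)) * ((b:ℤ)^2)^k := by
          refine Finset.sum_le_sum fun k _ => ?_
          rw [abs_mul, abs_pow, abs_of_nonneg hBpos]
          have h1 : |d (2*k+1) - e (2*k+1)| * (b:ℤ)^(2*k+1) ≤ ((b:ℤ)-1) * (b:ℤ)^(2*k+1) :=
            mul_le_mul_of_nonneg_right (hf _) (pow_nonneg hBpos _)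
          have h2 : ((b:ℤ)-1) * (b:ℤ)^(2*k+1) = ((b:ℤ)*((b:ℤ)-1)) * ((b:ℤ)^2)^k := by
            rw [pow_succ, pow_mul]; ring
          linarith [h1, h2.le, h2.ge]
      _ = (b:ℤ)*((b:ℤ)-1)*G := by rw [hGdef, ← Finset.mul_sum]
  -- bound on the even sum
  have hRbound : |∑ k ∈ Finset.range ℓ, (d (2*k) - e (2*k)) * (b:ℤ)^(2*k)| ≤ ((b:ℤ)-1)*G := by
    calc |∑ k ∈ Finset.range ℓ, (d (2*k) - e (2*k)) * (b:ℤ)^(2*k)|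
        ≤ ∑ k ∈ Finset.range ℓ, |(d (2*k) - e (2*k)) * (b:ℤ)^(2*k)| :=
          Finset.abs_sum_le_sum_abs _ _
      _ ≤ ∑ k ∈ Finset.range ℓ, ((b:ℤ)-1) * ((b:ℤ)^2)^k := by
          refine Finset.sum_le_sum fun k _ => ?_
          rw [abs_mul, abs_pow, abs_of_nonneg hBpos, pow_mul]
          exact mul_le_mul_of_nonneg_right (hf _) (pow_nonneg (by positivity) _)
      _ = ((b:ℤ)-1)*G := by rw [hGdef, ← Finset.mul_sum]
  have hSev2 : Sev = (∑ k ∈ Finset.range ℓ, (d (2*k) - e (2*k)) * (b:ℤ)^(2*k))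
      + (d (2*ℓ) - e (2*ℓ)) * (b:ℤ)^(2*ℓ) := by
    rw [hSev', Finset.sum_range_succ]
  have hfd : (1:ℤ) ≤ |d (2*ℓ) - e (2*ℓ)| := Int.one_le_abs (sub_ne_zero.2 hdiff)
  have htop : (b:ℤ)^(2*ℓ) ≤ |(d (2*ℓ) - e (2*ℓ)) * (b:ℤ)^(2*ℓ)| := by
    rw [abs_mul, abs_pow, abs_of_nonneg hBpos]
    exact le_mul_of_one_le_left (pow_nonneg hBpos _) hfd
  have hSevlow : (b:ℤ)^(2*ℓ) - ((b:ℤ)-1)*G ≤ |Sev| := by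
    have h3 := abs_sub_abs_le_abs_sub ((d (2*ℓ) - e (2*ℓ)) * (b:ℤ)^(2*ℓ))
      (-(∑ k ∈ Finset.range ℓ, (d (2*k) - e (2*k)) * (b:ℤ)^(2*k)))
    rw [abs_neg, sub_neg_eq_add] at h3
    have h4 : (d (2*ℓ) - e (2*ℓ)) * (b:ℤ)^(2*ℓ)
        + (∑ k ∈ Finset.range ℓ, (d (2*k) - e (2*k)) * (b:ℤ)^(2*k)) = Sev := by
      rw [hSev2]; ring
    rw [h4] at h3
    linarith
  -- integer inequalities
  have heven : (b:ℤ)^(2*ℓ+1) + 1 ≤ ((b:ℤ)+1) * |Sev| := by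
    have hp : (b:ℤ)^(2*ℓ+1) = (b:ℤ)^(2*ℓ) * (b:ℤ) := pow_succ _ _
    nlinarith [hSevlow, hG, abs_nonneg Sev]
  have hodd : ((b:ℤ)+1) * |Sod| ≤ (b:ℤ)^(2*ℓ+1) - (b:ℤ) := by
    have hp : (b:ℤ)^(2*ℓ+1) = (b:ℤ)^(2*ℓ) * (b:ℤ) := pow_succ _ _
    nlinarith [hboundodd, hG, abs_nonneg Sod]
  refine ⟨?_, ?_, ?_⟩
  · intro h
    rw [h] at heven
    linarith
  · have hq1 : (0:ℚ) < (b:ℚ) + 1 := by positivity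
    have h2 : ((b:ℚ))^(2*ℓ+1) + 1 ≤ ((b:ℚ)+1) * |((Sev:ℤ):ℚ)| := by exact_mod_cast heven
    rw [div_mul_eq_mul_div, div_le_iff₀ hq1]
    have hp : ((b:ℚ))^(2*ℓ+1) = (b:ℚ)^(2*ℓ) * (b:ℚ) := pow_succ _ _
    rw [hp] at h2
    nlinarith [h2]
  · have hq1 : (0:ℚ) < (b:ℚ) + 1 := by positivity
    have h2 : ((b:ℚ)+1) * |((Sod:ℤ):ℚ)| ≤ ((b:ℚ))^(2*ℓ+1) - (b:ℚ) := by exact_mod_cast hodd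
    rw [div_mul_eq_mul_div, ← sub_div, le_div_iff₀ hq1]
    have hp : ((b:ℚ))^(2*ℓ+1) = (b:ℚ)^(2*ℓ) * (b:ℚ) := pow_succ _ _
    rw [hp] at h2
    nlinarith [h2]
end

section
/- For natural numbers k₁, k₂, n, m with 0 ≤ n ≤ k₁, 0 ≤ m ≤ k₂, and (k₁, n) ≠ (k₂, m), one has (−2)^{k₁} + 2^n = (−2)^{k₂} + 2^m if and only if k₁ and k₂ are both odd with n = k₁ and m = k₂. -/
lemma aux0 (a b c d : ℕ) (hba : b ≤ a) (hdc : d ≤ c) (hbd : b < d)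
    (h : 2 ^ a + 2 ^ b = 2 ^ c + 2 ^ d) : False := by
  rcases eq_or_lt_of_le hba with rfl | hab
  · have h2 : (2:ℕ) ^ d ≤ 2 ^ c := Nat.pow_le_pow_right (by norm_num) hdc
    have h3 : (2:ℕ) ^ (b + 1) < 2 ^ (d + 1) :=
      Nat.pow_lt_pow_right (by norm_num) (by omega)
    rw [pow_succ, pow_succ] at h3
    omega
  · have hdvd : (2:ℕ) ^ (b + 1) ∣ 2 ^ c + 2 ^ d :=
      dvd_add (pow_dvd_pow 2 (by omega)) (pow_dvd_pow 2 (by omega))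
    rw [← h] at hdvd
    have hdvd2 : (2:ℕ) ^ (b + 1) ∣ 2 ^ a := pow_dvd_pow 2 (by omega)
    have hdvd3 : (2:ℕ) ^ (b + 1) ∣ 2 ^ b := (Nat.dvd_add_right hdvd2).mp hdvd
    have h4 := Nat.le_of_dvd (by positivity) hdvd3
    have h5 : (2:ℕ) ^ b < 2 ^ (b + 1) := Nat.pow_lt_pow_right (by norm_num) (by omega)
    omega

lemma aux (a b c d : ℕ) (hba : b ≤ a) (hdc : d ≤ c)
    (h : 2 ^ a + 2 ^ b = 2 ^ c + 2 ^ d) : a = c ∧ b = d := by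
  rcases lt_trichotomy b d with hbd | rfl | hbd
  · exact absurd (aux0 a b c d hba hdc hbd h) (by simp)
  · have : (2:ℕ) ^ a = 2 ^ c := by omega
    exact ⟨Nat.pow_right_injective (by norm_num) this, rfl⟩
  · exact absurd (aux0 c d a b hdc hba hbd h.symm) (by simp)

lemma aux' (a b c d : ℕ) (h : 2 ^ a + 2 ^ b = 2 ^ c + 2 ^ d) :
    (a = c ∧ b = d) ∨ (a = d ∧ b = c) := by
  have e1 : 2 ^ max a b + 2 ^ min a b = 2 ^ a + 2 ^ b := by
    rcases le_total a b with h' | h'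
    · rw [max_eq_right h', min_eq_left h', add_comm]
    · rw [max_eq_left h', min_eq_right h']
  have e2 : 2 ^ max c d + 2 ^ min c d = 2 ^ c + 2 ^ d := by
    rcases le_total c d with h' | h'
    · rw [max_eq_right h', min_eq_left h', add_comm]
    · rw [max_eq_left h', min_eq_right h']
  have := aux (max a b) (min a b) (max c d) (min c d)
    (min_le_max) (min_le_max) (by rw [e1, e2, h])
  omega

theorem neg_two_pow_add_two_pow_eq_iff
    (k₁ k₂ n m : ℕ) (hn : n ≤ k₁) (hm : m ≤ k₂) (hne : (k₁, n) ≠ (k₂, m)) :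
    ((-2 : ℤ) ^ k₁ + 2 ^ n = (-2 : ℤ) ^ k₂ + 2 ^ m) ↔
      (Odd k₁ ∧ Odd k₂ ∧ n = k₁ ∧ m = k₂) := by
  constructor
  · intro h
    rcases Nat.even_or_odd k₁ with he1 | ho1 <;> rcases Nat.even_or_odd k₂ with he2 | ho2
    · rw [Even.neg_pow he1, Even.neg_pow he2] at h
      have h' : (2:ℕ) ^ k₁ + 2 ^ n = 2 ^ k₂ + 2 ^ m := by exact_mod_cast h
      rcases aux' k₁ n k₂ m h' with ⟨h1, h2⟩ | ⟨h1, h2⟩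
      · exact absurd (by rw [h1, h2]) hne
      · exact absurd (by rw [Prod.ext_iff]; constructor <;> omega) hne
    · rw [Even.neg_pow he1, Odd.neg_pow ho2] at h
      have hp : (2:ℤ) ^ m ≤ 2 ^ k₂ := pow_le_pow_right₀ (by norm_num) hm
      have hpos : (0:ℤ) < 2 ^ k₁ + 2 ^ n := by positivity
      exfalso; linarith
    · rw [Odd.neg_pow ho1, Even.neg_pow he2] at h
      have hp : (2:ℤ) ^ n ≤ 2 ^ k₁ := pow_le_pow_right₀ (by norm_num) hn
      have hpos : (0:ℤ) < 2 ^ k₂ + 2 ^ m := by positivity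
      exfalso; linarith
    · rw [Odd.neg_pow ho1, Odd.neg_pow ho2] at h
      have h' : (2:ℕ) ^ n + 2 ^ k₂ = 2 ^ m + 2 ^ k₁ := by
        have : (2:ℤ) ^ n + 2 ^ k₂ = 2 ^ m + 2 ^ k₁ := by linarith
        exact_mod_cast this
      rcases aux' n k₂ m k₁ h' with ⟨h1, h2⟩ | ⟨h1, h2⟩
      · exact absurd (by rw [Prod.ext_iff]; constructor <;> omega) hne
      · exact ⟨ho1, ho2, h1, h2.symm⟩
  · rintro ⟨ho1, ho2, rfl, rfl⟩
    rw [Odd.neg_pow ho1, Odd.neg_pow ho2]; ring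
end

section
/- The range of the base-2 sign-flipping sequence a (defined by a_n = Σ_k d_k·(−2)^k where n = Σ_k d_k·2^k in binary) is all of ℤ; that is, the map n ↦ a_n is a bijection from ℕ to ℤ. -/
/-- Negabinary evaluation of the binary digits of `n`. -/
def negaEval (b : ℕ) (n : ℕ) : ℤ :=
  (Nat.digits b n).foldr (fun d acc => (d : ℤ) - (b : ℤ) * acc) 0

lemma negaEval_two_zero : negaEval 2 0 = 0 := by simp [negaEval]

lemma negaEval_two_rec (n : ℕ) :
    negaEval 2 n = (n % 2 : ℕ) - 2 * negaEval 2 (n / 2) := by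
  rcases Nat.eq_zero_or_pos n with h | h
  · subst h; simp [negaEval]
  · unfold negaEval
    rw [Nat.digits_def' (by norm_num : 1 < 2) h]
    simp

lemma negaEval_two_eq_zero {n : ℕ} (h : negaEval 2 n = 0) : n = 0 := by
  induction n using Nat.strong_induction_on with
  | _ n ih =>
    rcases Nat.eq_zero_or_pos n with h0 | h0
    · exact h0
    · rw [negaEval_two_rec n] at h
      have hrec : negaEval 2 (n / 2) = 0 := by omega
      have := ih (n / 2) (Nat.div_lt_self h0 (by norm_num)) hrec
      omega

lemma negaEval_two_injective : Function.Injective (fun n : ℕ => negaEval 2 n) := by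
  intro m
  induction m using Nat.strong_induction_on with
  | _ m ih =>
    intro n h
    simp only at h
    rcases Nat.eq_zero_or_pos m with h0 | h0
    · subst h0
      rw [negaEval_two_zero] at h
      exact (negaEval_two_eq_zero h.symm).symm
    · rw [negaEval_two_rec m, negaEval_two_rec n] at h
      have heq : negaEval 2 (m / 2) = negaEval 2 (n / 2) := by omega
      have := ih (m / 2) (Nat.div_lt_self h0 (by norm_num)) heq
      omega

lemma negaEval_two_surj_aux : ∀ k : ℕ, ∀ z : ℤ,
    2 * z.natAbs + (if z < 0 then 1 else 0) ≤ k → ∃ n : ℕ, negaEval 2 n = z := by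
  intro k
  induction k using Nat.strong_induction_on with
  | _ k ih =>
    intro z hz
    rcases eq_or_ne z 0 with rfl | h0
    · exact ⟨0, negaEval_two_zero⟩
    · have hmeas : 2 * (-(z / 2)).natAbs + (if -(z / 2) < 0 then 1 else 0) < k := by
        rcases Int.natAbs_eq z with he | he <;>
        rcases Int.natAbs_eq (-(z / 2)) with he2 | he2 <;>
          split_ifs at hz ⊢ <;> omega
      obtain ⟨n', hn'⟩ := ih _ hmeas (-(z / 2)) (le_refl _)
      refine ⟨2 * n' + (z % 2).toNat, ?_⟩
      rw [negaEval_two_rec]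
      have h2 : (z % 2).toNat < 2 := by omega
      have hmod : (2 * n' + (z % 2).toNat) % 2 = (z % 2).toNat := by omega
      have hdiv : (2 * n' + (z % 2).toNat) / 2 = n' := by omega
      rw [hmod, hdiv, hn']
      omega

lemma negaEval_two_surjective : Function.Surjective (fun n : ℕ => negaEval 2 n) := by
  intro z
  exact negaEval_two_surj_aux (2 * z.natAbs + (if z < 0 then 1 else 0)) z (le_refl _)

theorem negaEval_two_bijective :
    Function.Bijective (fun n : ℕ => negaEval 2 n) := by
  exact ⟨negaEval_two_injective, negaEval_two_surjective⟩
end
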